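/- arXiv:1107.3960 — 2 statements merged into one kernel-verified Lean document; each statement's English description precedes it below -/
import Mathlib

section
/- If a₁,…,a_q > 0 satisfy ∑ᵢ aᵢ > q/2, then for all u ∈ [−1,1], the series expansion g_{a₁,…,a_q}(u) = ∑_{m≥1} c_m u^m holds, where c_m = (q^q/(q−1)!) · (∏_{i=2}^q aᵢ)/(∑ᵢ aᵢ)^q · ∑_{j+k=m, 1≤j≤q} σ_{j−1} · (k+q−1)⋯(k+1) · ((∑ᵢaᵢ − q)/∑ᵢaᵢ)^k, with σ₀ = 1, σᵢ = ∑_{2≤j₁<⋯<jᵢ≤q} ∏_{l=1}^i (1−a_{j_l})/a_{j_l} for 1 ≤ i ≤ q−1, and σᵢ = 0 for i ≥ q. -/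
/-!
Write `S = ∑ aᵢ` and `r = (S - q) / S`. The denominator of `g` is `S^q (1 - r u)^q`, and
`q/2 < S` is exactly `|r| < 1`, so `(1 - r u)^(-q) = ∑ₖ (k+1)⋯(k+q-1)/(q-1)! · (r u)^k` converges
on `[-1, 1]`. Factoring `aᵢ` out of each `aᵢ + (1 - aᵢ) u` turns the numerator into the polynomial
`q^q (∏_{i≥2} aᵢ) ∑_{k<q} σ_k u^(k+1)`, and `c_m` is the Cauchy product of the two expansions.
-/

noncomputable def g (q : ℕ) (a : ℕ → ℝ) (u : ℝ) : ℝ :=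
  (q : ℝ) ^ q * u * (∏ i ∈ Finset.Icc 2 q, (a i + (1 - a i) * u)) /
    ((∑ i ∈ Finset.Icc 1 q, a i) - ((∑ i ∈ Finset.Icc 1 q, a i) - q) * u) ^ q

/-- elementary symmetric functions of the (1-aᵢ)/aᵢ, i = 2,…,q -/
noncomputable def sigma (q : ℕ) (a : ℕ → ℝ) (i : ℕ) : ℝ :=
  ∑ s ∈ (Finset.Icc 2 q).powersetCard i, ∏ j ∈ s, (1 - a j) / a j

/-- the power series coefficients of g at 0 -/
noncomputable def c (q : ℕ) (a : ℕ → ℝ) (m : ℕ) : ℝ :=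
  ((q : ℝ) ^ q / (Nat.factorial (q - 1))) *
    ((∏ i ∈ Finset.Icc 2 q, a i) / (∑ i ∈ Finset.Icc 1 q, a i) ^ q) *
    ∑ j ∈ Finset.Icc 1 (min q m),
      sigma q a (j - 1) *
        (∏ l ∈ Finset.range (q - 1), ((m - j : ℕ) + 1 + l : ℝ)) *
        (((∑ i ∈ Finset.Icc 1 q, a i) - q) / (∑ i ∈ Finset.Icc 1 q, a i)) ^ (m - j)

open Finset Nat

lemma hasSum_ite_le_sub {α : Type*} [AddCommMonoid α] [TopologicalSpace α] {f : ℕ → α} {a : α}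
    (j : ℕ) (hf : HasSum f a) : HasSum (fun m => if j ≤ m then f (m - j) else 0) a := by
  rw [← (add_left_injective j).hasSum_iff]
  · simpa [Function.comp_def] using hf
  · intro m hm
    rw [if_neg]
    contrapose! hm
    exact ⟨m - j, by simp; omega⟩

lemma HasSum.sum_filter_le_mul_sub {α : Type*} [NonUnitalNonAssocSemiring α] [TopologicalSpace α]
    [IsTopologicalSemiring α] {b : ℕ → α} {T : α} (hb : HasSum b T) (s : Finset ℕ) (p : ℕ → α) :
    HasSum (fun m => ∑ j ∈ s with j ≤ m, p j * b (m - j)) ((∑ j ∈ s, p j) * T) := by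
  simp only [sum_filter, sum_mul]
  refine hasSum_sum fun j _ => ?_
  simpa [mul_ite] using hasSum_ite_le_sub j (hb.mul_left (p j))

lemma prod_range_natCast_add_one_add (k t : ℕ) :
    ∏ l ∈ range t, ((k : ℝ) + 1 + l) = ((k + 1).ascFactorial t : ℕ) := by
  push_cast [Nat.ascFactorial_eq_prod_range]
  rfl

lemma hasSum_prod_range_mul_geometric {x : ℝ} (hx : |x| < 1) (n : ℕ) :
    HasSum (fun k : ℕ => (∏ l ∈ range n, ((k : ℝ) + 1 + l)) * x ^ k) ((n)! / (1 - x) ^ (n + 1)) := by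
  have key := (hasSum_choose_mul_geometric_of_norm_lt_one n (r := x) hx).mul_left ((n)! : ℝ)
  have hterm (k : ℕ) : ((n)! : ℝ) * ((k + n).choose n * x ^ k)
      = (∏ l ∈ range n, ((k : ℝ) + 1 + l)) * x ^ k := by
    rw [prod_range_natCast_add_one_add, Nat.ascFactorial_eq_factorial_mul_choose]
    push_cast
    ring
  simpa only [hterm, mul_one_div] using key

lemma prod_one_add_mul_eq_sum_powersetCard {ι R : Type*} [CommSemiring R] (s : Finset ι)
    (f : ι → R) (u : R) :
    ∏ i ∈ s, (1 + f i * u) = ∑ k ∈ range (#s + 1), (∑ t ∈ s.powersetCard k, ∏ i ∈ t, f i) * u ^ k := by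
  rw [prod_one_add, sum_powerset]
  refine sum_congr rfl fun k _ => ?_
  rw [sum_mul]
  refine sum_congr rfl fun t ht => ?_
  rw [prod_mul_distrib, prod_const, (mem_powersetCard.mp ht).2]

lemma prod_add_one_sub_mul_eq_sum_sigma (q : ℕ) (hq : 1 ≤ q) (a : ℕ → ℝ)
    (ha : ∀ i ∈ Icc 2 q, a i ≠ 0) (u : ℝ) :
    ∏ i ∈ Icc 2 q, (a i + (1 - a i) * u)
      = (∏ i ∈ Icc 2 q, a i) * ∑ k ∈ range q, sigma q a k * u ^ k := by
  have hfactor : ∀ i ∈ Icc 2 q, a i + (1 - a i) * u = a i * (1 + (1 - a i) / a i * u) :=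
    fun i hi => by field_simp [ha i hi]
  rw [prod_congr rfl hfactor, prod_mul_distrib, prod_one_add_mul_eq_sum_powersetCard,
    show #(Icc 2 q) + 1 = q by simp; omega]
  rfl

lemma g_eq_div_one_sub_pow (q : ℕ) (hq : 1 ≤ q) (a : ℕ → ℝ) (ha : ∀ i ∈ Icc 2 q, a i ≠ 0)
    {S : ℝ} (hS : ∑ i ∈ Icc 1 q, a i = S) (hS0 : S ≠ 0) (u : ℝ) :
    g q a u = (q : ℝ) ^ q * (∏ i ∈ Icc 2 q, a i) / S ^ q *
      (u * ∑ k ∈ range q, sigma q a k * u ^ k) / (1 - (S - q) / S * u) ^ q := by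
  have hden : S - (S - q) * u = S * (1 - (S - q) / S * u) := by field_simp
  rw [g, hS, hden, prod_add_one_sub_mul_eq_sum_sigma q hq a ha, mul_pow]
  ring

lemma c_succ_mul_pow (q : ℕ) (a : ℕ → ℝ) {S : ℝ} (hS : ∑ i ∈ Icc 1 q, a i = S) (m : ℕ) (u : ℝ) :
    c q a (m + 1) * u ^ (m + 1) =
      ∑ k ∈ range q with k ≤ m,
        (q ^ q / (q - 1)! * ((∏ i ∈ Icc 2 q, a i) / S ^ q) * sigma q a k * u ^ (k + 1)) *
        ((∏ l ∈ range (q - 1), ((m - k : ℕ) + 1 + l : ℝ)) * ((S - q) / S * u) ^ (m - k)) := by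
  rw [c, hS, mul_sum, sum_mul]
  refine sum_nbij' (· - 1) (· + 1) ?_ ?_ ?_ ?_ ?_
  · simp only [mem_Icc, mem_filter, mem_range]
    omega
  · simp only [mem_Icc, mem_filter, mem_range]
    omega
  · simp only [mem_Icc]
    omega
  · simp
  · intro j hj
    simp only [mem_Icc] at hj
    obtain ⟨k, rfl⟩ : ∃ k, j = k + 1 := ⟨j - 1, by omega⟩
    obtain ⟨d, rfl⟩ : ∃ d, m = k + d := ⟨m - k, by omega⟩
    simp only [add_tsub_cancel_right, add_tsub_add_eq_tsub_right, add_tsub_cancel_left,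
      mul_pow]
    ring

lemma abs_sub_div_mul_lt_one {q S u : ℝ} (hq : 0 < q) (hS : q / 2 < S) (hu : |u| ≤ 1) :
    |(S - q) / S * u| < 1 := by
  have hS0 : 0 < S := by linarith
  have hr : |(S - q) / S| < 1 := by
    rw [abs_div, abs_of_pos hS0, div_lt_one hS0, abs_lt]
    constructor <;> linarith
  rw [abs_mul]
  nlinarith [abs_nonneg u, abs_nonneg ((S - q) / S)]

theorem stmt_12 (q : ℕ) (hq : 1 ≤ q) (a : ℕ → ℝ)
    (ha : ∀ i ∈ Finset.Icc 1 q, 0 < a i)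
    (hsum : (q : ℝ) / 2 < ∑ i ∈ Finset.Icc 1 q, a i)
    (u : ℝ) (hu : u ∈ Set.Icc (-1 : ℝ) 1) :
    (∑ i ∈ Finset.Icc 1 q, a i) - ((∑ i ∈ Finset.Icc 1 q, a i) - q) * u ≠ 0 ∧
    HasSum (fun m : ℕ => c q a (m + 1) * u ^ (m + 1)) (g q a u) := by
  obtain ⟨S, hS⟩ : ∃ S, ∑ i ∈ Icc 1 q, a i = S := ⟨_, rfl⟩
  rw [hS] at hsum ⊢
  have hq0 : (0 : ℝ) < q := by exact_mod_cast hq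
  have hS0 : 0 < S := by linarith
  have hx := abs_sub_div_mul_lt_one hq0 hsum (abs_le.mpr hu)
  have h1x : 1 - (S - q) / S * u ≠ 0 := by linarith [(abs_lt.mp hx).2]
  have hden : S - (S - q) * u = S * (1 - (S - q) / S * u) := by field_simp
  refine ⟨hden ▸ mul_ne_zero hS0.ne' h1x, ?_⟩
  have ha0 : ∀ i ∈ Icc 2 q, a i ≠ 0 := fun i hi =>
    (ha i (Icc_subset_Icc_left one_le_two hi)).ne'
  set K : ℝ := q ^ q / (q - 1)! * ((∏ i ∈ Icc 2 q, a i) / S ^ q) with hK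
  have hser := (hasSum_prod_range_mul_geometric hx (q - 1)).sum_filter_le_mul_sub (range q)
    fun k => K * sigma q a k * u ^ (k + 1)
  rw [Nat.sub_add_cancel hq] at hser
  have hval : (∑ k ∈ range q, K * sigma q a k * u ^ (k + 1)) *
      ((q - 1)! / (1 - (S - q) / S * u) ^ q) = g q a u := by
    have hpoly : ∑ k ∈ range q, K * sigma q a k * u ^ (k + 1)
        = K * (u * ∑ k ∈ range q, sigma q a k * u ^ k) := by
      rw [mul_sum, mul_sum]
      exact sum_congr rfl fun k _ => by ring
    rw [hpoly, g_eq_div_one_sub_pow q hq a ha0 hS hS0.ne', hK]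
    field_simp
  simpa only [c_succ_mul_pow q a hS, hval] using hser
end

section
/- If a₁,…,a_q > 0 satisfy ∑ᵢ aᵢ ≥ q and aᵢ ≤ 1 for all 2 ≤ i ≤ q, then all power series coefficients c_{q,a₁,…,a_q,m} of g_{a₁,…,a_q} around 0 are nonnegative. -/
/-!
Every summand of `c q a m` is a product of three nonnegative factors: `σ_{j-1}` is an elementary
symmetric function of the numbers `(1 - aᵢ)/aᵢ ≥ 0`, the rising factorial is positive, and
`((∑ aᵢ - q)/∑ aᵢ)^k` is a power of a nonnegative number.
-/

open Finset

lemma sigma_nonneg {q : ℕ} {a : ℕ → ℝ} (ha : ∀ i ∈ Icc 2 q, 0 ≤ a i)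
    (hle : ∀ i ∈ Icc 2 q, a i ≤ 1) (i : ℕ) : 0 ≤ sigma q a i :=
  sum_nonneg fun _ hs => prod_nonneg fun j hj =>
    have hj : j ∈ Icc 2 q := (mem_powersetCard.mp hs).1 hj
    div_nonneg (sub_nonneg.mpr (hle j hj)) (ha j hj)

lemma c_nonneg {q : ℕ} {a : ℕ → ℝ} (ha : ∀ i ∈ Icc 2 q, 0 ≤ a i)
    (hsum : (q : ℝ) ≤ ∑ i ∈ Icc 1 q, a i) (hle : ∀ i ∈ Icc 2 q, a i ≤ 1) (m : ℕ) :
    0 ≤ c q a m := by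
  have hS : 0 ≤ ∑ i ∈ Icc 1 q, a i := (Nat.cast_nonneg q).trans hsum
  have hratio : 0 ≤ ((∑ i ∈ Icc 1 q, a i) - q) / ∑ i ∈ Icc 1 q, a i :=
    div_nonneg (sub_nonneg.mpr hsum) hS
  have hprod : 0 ≤ (∏ i ∈ Icc 2 q, a i) / (∑ i ∈ Icc 1 q, a i) ^ q :=
    div_nonneg (prod_nonneg ha) (pow_nonneg hS q)
  refine mul_nonneg (mul_nonneg (by positivity) hprod) (sum_nonneg fun j _ => ?_)
  exact mul_nonneg (mul_nonneg (sigma_nonneg ha hle _)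
    (prod_nonneg fun l _ => by positivity)) (pow_nonneg hratio _)

theorem stmt_14_general (q : ℕ) (a : ℕ → ℝ)
    (ha : ∀ i ∈ Finset.Icc 1 q, 0 < a i)
    (hsum : (q : ℝ) ≤ ∑ i ∈ Finset.Icc 1 q, a i)
    (hle : ∀ i ∈ Finset.Icc 2 q, a i ≤ 1) :
    ∀ m : ℕ, 1 ≤ m → 0 ≤ c q a m := fun m _ =>
  c_nonneg (fun i hi => (ha i (Icc_subset_Icc_left one_le_two hi)).le) hsum hle m

theorem stmt_14 (q : ℕ) (hq : 1 ≤ q) (a : ℕ → ℝ)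
    (ha : ∀ i ∈ Finset.Icc 1 q, 0 < a i)
    (hsum : (q : ℝ) ≤ ∑ i ∈ Finset.Icc 1 q, a i)
    (hle : ∀ i ∈ Finset.Icc 2 q, a i ≤ 1) :
    ∀ m : ℕ, 1 ≤ m → 0 ≤ c q a m :=
  stmt_14_general q a ha hsum hle
end
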